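/- arXiv:0809.2968 — 7 statements merged into one kernel-verified Lean document; each statement's English description precedes it below -/
import Mathlib

section
/- Transposition invariance: the minimum cardinality K_R(q^m, n, ρ) of a code in GF(q^m)^n with rank covering radius at most ρ equals K_R(q^n, m, ρ), the minimum cardinality of a code in GF(q^n)^m with rank covering radius at most ρ. -/
/-- `KRmat Fq m n ρ` : the minimum cardinality of a code of `m × n` matrices over `GF(q)`
with rank covering radius at most `ρ` (vectors of `GF(q^m)^n` being identified with
`m × n` matrices over `GF(q)` by basis expansion, rank distance = rank of difference). -/
noncomputable def KRmat (Fq : Type*) [Field Fq] [Fintype Fq] (m n ρ : ℕ) : ℕ :=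
  sInf {k | ∃ C : Finset (Matrix (Fin m) (Fin n) Fq), C.card = k ∧
    ∀ V : Matrix (Fin m) (Fin n) Fq, ∃ M ∈ C, (V - M).rank ≤ ρ}

open Matrix

section RankCovering

variable {m n R : Type*} [Fintype m] [Fintype n] [Field R]

def IsRankCovering (C : Finset (Matrix m n R)) (ρ : ℕ) : Prop :=
  ∀ V : Matrix m n R, ∃ M ∈ C, (V - M).rank ≤ ρ

theorem IsRankCovering.image_transpose [DecidableEq R] {C : Finset (Matrix m n R)} {ρ : ℕ}
    (hC : IsRankCovering C ρ) : IsRankCovering (C.image transpose) ρ := by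
  intro V
  obtain ⟨M, hM, hrank⟩ := hC Vᵀ
  refine ⟨Mᵀ, Finset.mem_image_of_mem _ hM, ?_⟩
  rwa [← rank_transpose, transpose_sub, transpose_transpose]

theorem exists_isRankCovering_transpose {k ρ : ℕ}
    (h : ∃ C : Finset (Matrix m n R), C.card = k ∧ IsRankCovering C ρ) :
    ∃ C : Finset (Matrix n m R), C.card = k ∧ IsRankCovering C ρ := by
  classical
  obtain ⟨C, rfl, hC⟩ := h
  exact ⟨C.image transpose, Finset.card_image_of_injective _ transpose_injective,
    hC.image_transpose⟩

end RankCovering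

/-- Transposition invariance: `K_R(q^m, n, ρ) = K_R(q^n, m, ρ)`. -/
theorem stmt4 (Fq : Type*) [Field Fq] [Fintype Fq] (m n ρ : ℕ) :
    KRmat Fq m n ρ = KRmat Fq n m ρ := by
  unfold KRmat
  congr 1
  ext k
  exact ⟨exists_isRankCovering_transpose, exists_isRankCovering_transpose⟩
end

section
/- For any K vectors v_0, ..., v_{K−1} in GF(q^m)^n with n ≤ m, one can reorder them so that the sequence j ↦ d_R(v_j, {v_0,...,v_{j−1}}) is non-increasing, and then for every a ≥ 1 and every index j with q^{m(a−1)} ≤ j < q^{ma}, the rank distance from v_j to {v_0, ..., v_{j−1}} is at most n − a + 1. -/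
/-!
Order the vectors so that the sequence of prefix distances
`F_σ(j) = d_R(v_{σ j}, {v_{σ 0}, …, v_{σ (j-1)}})` is lexicographically maximal. Swapping
positions `j ≤ k` leaves `F_σ` unchanged before `j` and makes `F(j) ≥ F_σ(k)`, so maximality
forces `F_σ` to be non-increasing. For `j ≥ q^{m(a-1)}`, the Singleton bound applied to the
first `j + 1` vectors gives `i < i' ≤ j` at rank distance at most `n - a + 1`, whence
`F_σ(j) ≤ F_σ(i') ≤ n - a + 1`.
-/

/-- The rank weight of a vector `x ∈ GF(q^m)^n`: the dimension over `GF(q)` of the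
`GF(q)`-span of the coordinates of `x`. -/
noncomputable def rankWeight (Fq : Type*) [Field Fq] {Fqm : Type*} [Field Fqm] [Algebra Fq Fqm]
    {n : ℕ} (x : Fin n → Fqm) : ℕ :=
  Module.finrank Fq (Submodule.span Fq (Set.range x))

open Finset

section PrefixDist

variable {X : Type*} {K : ℕ}

/-- `d_D(w j, {w 0, …, w (j-1)})`; at `j = 0` the set is empty and `sInf ∅ = 0`. -/
noncomputable def prefixDist (D : X → X → ℕ) (w : Fin K → X) (j : Fin K) : ℕ :=
  sInf {d | ∃ i : Fin K, i < j ∧ d = D (w j) (w i)}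

variable (D : X → X → ℕ)

theorem prefixDist_le {w : Fin K → X} {i j : Fin K} (hij : i < j) :
    prefixDist D w j ≤ D (w j) (w i) :=
  Nat.sInf_le ⟨i, hij, rfl⟩

theorem prefixDist_congr {w w' : Fin K → X} {j : Fin K} (h : ∀ i ≤ j, w i = w' i) :
    prefixDist D w j = prefixDist D w' j := by
  unfold prefixDist
  congr 1
  ext d
  refine exists_congr fun i => and_congr_right fun hij => ?_
  rw [h j le_rfl, h i hij.le]

theorem prefixDist_le_prefixDist_comp_swap (w : Fin K → X) {j k : Fin K}
    (hj : 1 ≤ (j : ℕ)) (hjk : j ≤ k) :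
    prefixDist D w k ≤ prefixDist D (w ∘ Equiv.swap j k) j := by
  have hne : {d | ∃ i : Fin K, i < j ∧
      d = D ((w ∘ Equiv.swap j k) j) ((w ∘ Equiv.swap j k) i)}.Nonempty :=
    ⟨_, ⟨0, by omega⟩, Fin.mk_lt_of_lt_val hj, rfl⟩
  obtain ⟨i, hij, hi⟩ := Nat.sInf_mem hne
  change prefixDist D (w ∘ Equiv.swap j k) j = _ at hi
  rw [hi, Function.comp_apply, Function.comp_apply, Equiv.swap_apply_left,
    Equiv.swap_apply_of_ne_of_ne hij.ne (hij.trans_le hjk).ne]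
  exact prefixDist_le D (hij.trans_le hjk)

theorem exists_perm_prefixDist_antitone (v : Fin K → X) :
    ∃ σ : Equiv.Perm (Fin K), ∀ j k : Fin K, 1 ≤ (j : ℕ) → j ≤ k →
      prefixDist D (v ∘ σ) k ≤ prefixDist D (v ∘ σ) j := by
  obtain ⟨σ, -, hσ⟩ := exists_max_image univ
    (fun σ : Equiv.Perm (Fin K) => toLex fun j => prefixDist D (v ∘ σ) j) univ_nonempty
  refine ⟨σ, fun j k hj hjk => ?_⟩
  have hprefix : ∀ i < j, prefixDist D (v ∘ ⇑(σ * Equiv.swap j k)) i = prefixDist D (v ∘ σ) i :=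
    fun i hij => prefixDist_congr D fun i' hi' => by
      simp [Equiv.swap_apply_of_ne_of_ne (hi'.trans_lt hij).ne (hi'.trans_lt (hij.trans_le hjk)).ne]
  calc prefixDist D (v ∘ σ) k
      ≤ prefixDist D (v ∘ ⇑(σ * Equiv.swap j k)) j := prefixDist_le_prefixDist_comp_swap D _ hj hjk
    _ ≤ prefixDist D (v ∘ σ) j := Pi.apply_le_of_toLex (hσ _ (mem_univ _)) hprefix

end PrefixDist

theorem rankWeight_le_hammingNorm (Fq : Type*) [Field Fq] {Fqm : Type*} [Field Fqm]
    [Algebra Fq Fqm] [DecidableEq Fqm] {n : ℕ} (x : Fin n → Fqm) :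
    rankWeight Fq x ≤ hammingNorm x := by
  set s := ({i | x i ≠ 0} : Finset (Fin n)).image x
  have hspan : Submodule.span Fq (Set.range x) ≤ Submodule.span Fq s := by
    refine Submodule.span_le.2 ?_
    rintro _ ⟨i, rfl⟩
    by_cases hi : x i = 0
    · simp [hi]
    · exact Submodule.subset_span (by simpa [s] using ⟨i, hi, rfl⟩)
  calc rankWeight Fq x ≤ (s : Set Fqm).finrank Fq := Submodule.finrank_mono hspan
    _ ≤ #s := finrank_span_finset_le_card s
    _ ≤ hammingNorm x := card_image_le

/-- The Singleton bound: by pigeonhole, two of the words agree on some `t` coordinates. -/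
theorem exists_lt_hammingDist_le {ι β : Type*} [Fintype ι] [Fintype β] [DecidableEq β]
    {N t : ℕ} (ht : t ≤ Fintype.card ι) (hN : Fintype.card β ^ t < N) (w : Fin N → ι → β) :
    ∃ i i', i < i' ∧ hammingDist (w i') (w i) ≤ Fintype.card ι - t := by
  classical
  obtain ⟨S, -, hS⟩ := exists_subset_card_eq (s := (univ : Finset ι)) ht
  have hcard : Fintype.card (S → β) < Fintype.card (Fin N) := by simpa [hS] using hN
  obtain ⟨i, i', hne, heq⟩ := Fintype.exists_ne_map_eq_of_card_lt
    (fun i (s : S) => w i s) hcard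
  have hdist : hammingDist (w i') (w i) ≤ #Sᶜ := by
    refine card_le_card fun l hl => mem_compl.2 fun hlS => (mem_filter.1 hl).2 ?_
    exact (congrFun heq ⟨l, hlS⟩).symm
  rw [card_compl, hS] at hdist
  rcases hne.lt_or_gt with h | h
  · exact ⟨i, i', h, hdist⟩
  · exact ⟨i', i, h, hammingDist_comm (w i) (w i') ▸ hdist⟩

theorem rankWeight_sub_le_hammingDist (Fq : Type*) [Field Fq] {Fqm : Type*} [Field Fqm]
    [Algebra Fq Fqm] [DecidableEq Fqm] {n : ℕ} (x y : Fin n → Fqm) :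
    rankWeight Fq (x - y) ≤ hammingDist x y := by
  rw [hammingDist_comm, hammingDist_eq_hammingNorm, neg_add_eq_sub]
  exact rankWeight_le_hammingNorm Fq _

theorem stmt10_general (q m n K : ℕ) (Fq Fqm : Type*) [Field Fq] [Fintype Fq] [Field Fqm] [Fintype Fqm]
    [Algebra Fq Fqm] (hq : Fintype.card Fq = q) (hm : Module.finrank Fq Fqm = m)
    (v : Fin K → (Fin n → Fqm)) :
    ∃ σ : Equiv.Perm (Fin K),
      (∀ j k : Fin K, 1 ≤ (j : ℕ) → j ≤ k →
        sInf {d | ∃ i : Fin K, i < k ∧ d = rankWeight Fq (v (σ k) - v (σ i))} ≤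
        sInf {d | ∃ i : Fin K, i < j ∧ d = rankWeight Fq (v (σ j) - v (σ i))}) ∧
      (∀ (a : ℕ) (j : Fin K), 1 ≤ a → q ^ (m * (a - 1)) ≤ (j : ℕ) → (j : ℕ) < q ^ (m * a) →
        sInf {d | ∃ i : Fin K, i < j ∧ d = rankWeight Fq (v (σ j) - v (σ i))} ≤ n - a + 1) := by
  classical
  set D : (Fin n → Fqm) → (Fin n → Fqm) → ℕ := fun x y => rankWeight Fq (x - y)
  obtain ⟨σ, hσ⟩ := exists_perm_prefixDist_antitone D v
  refine ⟨σ, hσ, fun a j _ hj _ => ?_⟩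
  set t := min (a - 1) n
  have hcard : Fintype.card Fqm ^ t < j + 1 := by
    rw [Module.card_eq_pow_finrank (K := Fq), hq, hm, ← pow_mul]
    calc q ^ (m * t) ≤ q ^ (m * (a - 1)) :=
          Nat.pow_le_pow_right (hq ▸ Fintype.card_pos) (by gcongr; omega)
      _ < j + 1 := by omega
  obtain ⟨i, i', hii', hdist⟩ := exists_lt_hammingDist_le (by simp [t]) hcard
    fun i => v (σ (Fin.castLE j.isLt i))
  calc prefixDist D (v ∘ σ) j
      ≤ prefixDist D (v ∘ σ) (Fin.castLE j.isLt i') := hσ _ _ (by rw [Fin.val_castLE]; omega)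
          (by rw [Fin.le_def, Fin.val_castLE]; omega)
    _ ≤ D (v (σ (Fin.castLE j.isLt i'))) (v (σ (Fin.castLE j.isLt i))) := prefixDist_le D hii'
    _ ≤ n - t := (rankWeight_sub_le_hammingDist Fq _ _).trans (by simpa using hdist)
    _ ≤ n - a + 1 := by omega

/-- Any `K` vectors of `GF(q^m)^n` (`n ≤ m`) can be reordered so that
`j ↦ d_R(v_j, {v_0, …, v_{j-1}})` is non-increasing (for `j ≥ 1`), and then for all `a ≥ 1`
and `q^{m(a-1)} ≤ j < q^{ma}`, the distance from `v_j` to its predecessors is at most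
`n - a + 1`. -/
theorem stmt10 (q m n K : ℕ) (Fq Fqm : Type*) [Field Fq] [Fintype Fq] [Field Fqm] [Fintype Fqm]
    [Algebra Fq Fqm] (hq : Fintype.card Fq = q) (hm : Module.finrank Fq Fqm = m)
    (hnm : n ≤ m) (v : Fin K → (Fin n → Fqm)) :
    ∃ σ : Equiv.Perm (Fin K),
      (∀ j k : Fin K, 1 ≤ (j : ℕ) → j ≤ k →
        sInf {d | ∃ i : Fin K, i < k ∧ d = rankWeight Fq (v (σ k) - v (σ i))} ≤
        sInf {d | ∃ i : Fin K, i < j ∧ d = rankWeight Fq (v (σ j) - v (σ i))}) ∧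
      (∀ (a : ℕ) (j : Fin K), 1 ≤ a → q ^ (m * (a - 1)) ≤ (j : ℕ) → (j : ℕ) < q ^ (m * a) →
        sInf {d | ∃ i : Fin K, i < j ∧ d = rankWeight Fq (v (σ j) - v (σ i))} ≤ n - a + 1) :=
  stmt10_general q m n K Fq Fqm hq hm v
end

section
/- Greedy covering step: let C ⊆ GF(q^m)^n be a code that leaves exactly t > 0 vectors uncovered at rank radius ρ, and suppose the set N of all vectors within rank distance ρ of some uncovered vector has size at most q^{mn} − |C|. Then there exists a vector y ∉ C such that C ∪ {y} leaves at most t − ⌈t·v(ρ)/(q^{mn} − |C|)⌉ vectors uncovered. -/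
open Finset

lemma Finset.exists_mem_sum_ceilDiv_le {ι : Type*} {s : Finset ι} (hs : s.Nonempty)
    (f : ι → ℕ) {D : ℕ} (hD : #s ≤ D) : ∃ i ∈ s, (∑ j ∈ s, f j) ⌈/⌉ D ≤ f i := by
  obtain ⟨i, hi, hle⟩ := exists_le_of_sum_le (f := fun _ ↦ ∑ j ∈ s, f j)
    (g := fun i ↦ #s * f i) hs (by simp [mul_sum])
  refine ⟨i, hi, (ceilDiv_le_iff_le_smul (hs.card_pos.trans_le hD)).2 ?_⟩
  exact hle.trans (Nat.mul_le_mul_right _ hD)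

lemma Finset.exists_mem_ceilDiv_le_card_bipartiteBelow {α β : Type*} (r : α → β → Prop)
    [∀ a b, Decidable (r a b)] {s : Finset α} {t : Finset β} (ht : t.Nonempty) {v D : ℕ}
    (hv : ∀ a ∈ s, #(t.bipartiteAbove r a) = v) (hD : #t ≤ D) :
    ∃ b ∈ t, (#s * v) ⌈/⌉ D ≤ #(s.bipartiteBelow r b) := by
  rw [← sum_const_nat hv, sum_card_bipartiteAbove_eq_sum_card_bipartiteBelow]
  exact exists_mem_sum_ceilDiv_le ht _ hD

section Covering

variable {α : Type*} [Fintype α] (r : α → α → Prop) [DecidableRel r]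

def uncovered (C : Finset α) : Finset α := {x | ∀ c ∈ C, ¬ r x c}

lemma uncovered_insert [DecidableEq α] (y : α) (C : Finset α) :
    uncovered r (insert y C) = (uncovered r C).filter (¬ r · y) := by
  ext x
  simp [uncovered, and_comm]

theorem exists_notMem_card_uncovered_insert_le [DecidableEq α]
    (hsymm : ∀ ⦃x y⦄, r x y → r y x) (hrefl : ∀ x, r x x) (C : Finset α) {v : ℕ}
    (hv : ∀ x ∈ uncovered r C, #{y | r x y} = v) (hU : (uncovered r C).Nonempty) {D : ℕ}
    (hN : #{y | ∃ x ∈ uncovered r C, r y x} ≤ D) :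
    ∃ y ∉ C, #(uncovered r (insert y C)) ≤
      #(uncovered r C) - (#(uncovered r C) * v) ⌈/⌉ D := by
  simp only [uncovered_insert]
  set U := uncovered r C
  set N : Finset α := {y | ∃ x ∈ U, r y x}
  have hUN : U ⊆ N := fun x hx ↦ mem_filter.2 ⟨mem_univ x, x, hx, hrefl x⟩
  have hball : ∀ x ∈ U, #(N.bipartiteAbove r x) = v := fun x hx ↦ by
    rw [← hv x hx]
    congr 1
    ext y
    simpa [bipartiteAbove, N] using fun h ↦ ⟨x, hx, hsymm h⟩
  obtain ⟨y, hyN, hy⟩ := exists_mem_ceilDiv_le_card_bipartiteBelow r (hU.mono hUN) hball hN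
  refine ⟨y, fun hyC ↦ ?_, ?_⟩
  · obtain ⟨x, hx, hyx⟩ := (mem_filter.1 hyN).2
    simp only [U, uncovered, mem_filter] at hx
    exact hx.2 y hyC (hsymm hyx)
  · have hsplit := card_filter_add_card_filter_not (s := U) (r · y)
    simp only [bipartiteBelow] at hy
    omega

end Covering

section RankWeight

variable {Fq Fqm : Type*} [Field Fq] [Field Fqm] [Algebra Fq Fqm] {n : ℕ}

lemma rankWeight_neg (x : Fin n → Fqm) : rankWeight Fq (-x) = rankWeight Fq x := by
  rw [rankWeight, rankWeight, show -x = Neg.neg ∘ x from rfl, Set.range_comp,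
    Set.image_neg_eq_neg, Submodule.span_neg]

lemma rankWeight_sub_comm (x y : Fin n → Fqm) :
    rankWeight Fq (x - y) = rankWeight Fq (y - x) := by
  rw [← neg_sub, rankWeight_neg]

@[simp]
lemma rankWeight_zero : rankWeight Fq (0 : Fin n → Fqm) = 0 := by
  rw [rankWeight, Submodule.span_eq_bot.2 (by rintro _ ⟨i, rfl⟩; rfl), finrank_bot]

end RankWeight

lemma Nat.card_subtype_sub_left {G : Type*} [AddGroup G] (p : G → Prop) (x : G) :
    Nat.card {y // p (x - y)} = Nat.card {z // p z} :=
  Nat.card_congr ((Equiv.subLeft x).subtypeEquiv fun _ ↦ Iff.rfl)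

theorem stmt11_general (q m n ρ t : ℕ) (Fq Fqm : Type*) [Field Fq] [Field Fqm] [Fintype Fqm]
    [Algebra Fq Fqm] (C : Finset (Fin n → Fqm))
    (ht : Nat.card {x : Fin n → Fqm | ∀ c ∈ C, ρ < rankWeight Fq (x - c)} = t)
    (ht0 : 0 < t)
    (hN : Nat.card {y : Fin n → Fqm | ∃ x : Fin n → Fqm,
            (∀ c ∈ C, ρ < rankWeight Fq (x - c)) ∧ rankWeight Fq (y - x) ≤ ρ} ≤
          q ^ (m * n) - C.card) :
    ∃ y : Fin n → Fqm, y ∉ C ∧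
      Nat.card {x : Fin n → Fqm |
          (∀ c ∈ C, ρ < rankWeight Fq (x - c)) ∧ ρ < rankWeight Fq (x - y)} ≤
        t - (t * Nat.card {z : Fin n → Fqm // rankWeight Fq z ≤ ρ} + (q ^ (m * n) - C.card) - 1)
              / (q ^ (m * n) - C.card) := by
  classical
  let r (x y : Fin n → Fqm) : Prop := rankWeight Fq (x - y) ≤ ρ
  have hU : #(uncovered r C) = t := by simp [← ht, uncovered, r]
  have hball (x : Fin n → Fqm) :
      #{y | r x y} = Nat.card {z : Fin n → Fqm // rankWeight Fq z ≤ ρ} := by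
    rw [← Nat.card_subtype_sub_left _ x, Nat.card_eq_fintype_card, Fintype.card_subtype]
  obtain ⟨y, hyC, hy⟩ := exists_notMem_card_uncovered_insert_le r
    (fun x y h ↦ (rankWeight_sub_comm y x).trans_le h) (fun x ↦ by simp [r]) C
    (fun x _ ↦ hball x) (card_pos.1 (hU ▸ ht0)) (D := q ^ (m * n) - C.card)
    (by simpa [Nat.card_eq_card_toFinset, uncovered, r] using hN)
  refine ⟨y, hyC, ?_⟩
  rw [← Nat.ceilDiv_eq_add_pred_div, ← hU]
  simpa [Nat.card_eq_card_toFinset, uncovered, r, and_comm] using hy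

/-- Greedy covering step: if `C` leaves exactly `t > 0` vectors uncovered at rank radius
`ρ`, and the set of vectors within distance `ρ` of some uncovered vector has size at most
`q^{mn} - |C|`, then some `y ∉ C` can be added so that at most
`t - ⌈t·v(ρ)/(q^{mn} - |C|)⌉` vectors remain uncovered. -/
theorem stmt11 (q m n ρ t : ℕ) (Fq Fqm : Type*) [Field Fq] [Fintype Fq] [Field Fqm] [Fintype Fqm]
    [Algebra Fq Fqm] (hq : Fintype.card Fq = q) (hm : Module.finrank Fq Fqm = m)
    (hnm : n ≤ m) (hρ : ρ ≤ n) (C : Finset (Fin n → Fqm))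
    (ht : Nat.card {x : Fin n → Fqm | ∀ c ∈ C, ρ < rankWeight Fq (x - c)} = t)
    (ht0 : 0 < t)
    (hN : Nat.card {y : Fin n → Fqm | ∃ x : Fin n → Fqm,
            (∀ c ∈ C, ρ < rankWeight Fq (x - c)) ∧ rankWeight Fq (y - x) ≤ ρ} ≤
          q ^ (m * n) - C.card) :
    ∃ y : Fin n → Fqm, y ∉ C ∧
      Nat.card {x : Fin n → Fqm |
          (∀ c ∈ C, ρ < rankWeight Fq (x - c)) ∧ ρ < rankWeight Fq (x - y)} ≤
        t - (t * Nat.card {z : Fin n → Fqm // rankWeight Fq z ≤ ρ} + (q ^ (m * n) - C.card) - 1)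
              / (q ^ (m * n) - C.card) :=
  stmt11_general q m n ρ t Fq Fqm C ht ht0 hN
end

section
/- The volume of the union of any K balls of rank radius ρ in GF(q^m)^n (n ≤ m) is at most v(ρ) + Σ_{a=1}^{l} (q^{am} − q^{(a−1)m})·[v(ρ) − I(ρ, n−a+1)] + (K − q^{lm})·[v(ρ) − I(ρ, n−l)], where l = ⌊log_{q^m} K⌋ and I(ρ, d) is the minimum over pairs of centers at rank distance d of the volume of the intersection of the two balls of radius ρ around them. -/
/-- `interVol Fq Fqm n ρ d` : the intersection volume `I(ρ, d)` of two balls of rank radius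
`ρ` in `GF(q^m)^n` whose centers are at rank distance `d` (taken as the minimum over such
pairs of centers; it is in fact independent of the pair by distance-transitivity). -/
noncomputable def interVol (Fq Fqm : Type*) [Field Fq] [Field Fqm] [Algebra Fq Fqm]
    (n ρ d : ℕ) : ℕ :=
  sInf {k | ∃ c₁ c₂ : Fin n → Fqm, rankWeight Fq (c₁ - c₂) = d ∧
    k = Nat.card {x : Fin n → Fqm //
          rankWeight Fq (x - c₁) ≤ ρ ∧ rankWeight Fq (x - c₂) ≤ ρ}}

theorem log_add_one_eq_or_eq_pow {b K : ℕ} (hb : 1 < b) (hK : K ≠ 0) :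
    Nat.log b (K + 1) = Nat.log b K ∨ K + 1 = b ^ (Nat.log b K + 1) := by
  have h₁ := Nat.pow_log_le_self b hK
  have h₂ := Nat.lt_pow_succ_log_self hb K
  rcases (Nat.succ_le_of_lt h₂).lt_or_eq with h | h
  · exact Or.inl (Nat.log_eq_of_pow_le_of_lt_pow (by omega) h)
  · exact Or.inr h

theorem sum_Ico_log_eq {b : ℕ} (hb : 1 < b) (f : ℕ → ℕ) {K : ℕ} (hK : K ≠ 0) :
    ∑ k ∈ Finset.Ico 1 K, f (Nat.log b k) =
      ∑ a ∈ Finset.Icc 1 (Nat.log b K), (b ^ a - b ^ (a - 1)) * f (a - 1) +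
        (K - b ^ Nat.log b K) * f (Nat.log b K) := by
  induction K, Nat.one_le_iff_ne_zero.2 hK using Nat.le_induction with
  | base => simp
  | succ K hK1 ih =>
    have hK0 : K ≠ 0 := by omega
    rw [Finset.sum_Ico_succ_top hK1, ih hK0]
    have hpow := Nat.pow_log_le_self b hK0
    have hlog := log_add_one_eq_or_eq_pow hb hK0
    set j := Nat.log b K
    rcases hlog with h | h
    · rw [h, show K + 1 - b ^ j = (K - b ^ j) + 1 by omega]
      ring
    · have hgap : b ^ (j + 1) - b ^ j = (K - b ^ j) + 1 := by omega
      rw [h, Nat.log_pow hb, Finset.sum_Icc_succ_top (by omega), Nat.add_sub_cancel,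
        Nat.sub_self, zero_mul, add_zero, hgap]
      ring

open Module Submodule

section RankWeight

variable {Fq Fqm : Type*} [Field Fq] [Field Fqm] [Algebra Fq Fqm] {n : ℕ}

theorem rankWeight_add_finrank_ker (x : Fin n → Fqm) :
    rankWeight Fq x + finrank Fq (LinearMap.ker (Fintype.linearCombination Fq x)) = n := by
  rw [rankWeight, ← Fintype.range_linearCombination, LinearMap.finrank_range_add_finrank_ker,
    finrank_fin_fun]

theorem rankWeight_le_card_of_eq_zero (s : Finset (Fin n)) {x : Fin n → Fqm}
    (hx : ∀ i ∉ s, x i = 0) : rankWeight Fq x ≤ s.card := by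
  classical
  have hspan : span Fq (Set.range x) ≤ span Fq (s.image x : Set Fqm) := by
    rw [span_le]
    rintro _ ⟨i, rfl⟩
    by_cases hi : i ∈ s
    · exact subset_span (Finset.mem_coe.2 (Finset.mem_image_of_mem x hi))
    · simp [hx i hi]
  exact (Submodule.finrank_mono hspan).trans
    ((finrank_span_finset_le_card _).trans Finset.card_image_le)

theorem rankWeight_add_smul_le (x : Fin n → Fqm) (α : Fin n → Fq) (b : Fqm) :
    rankWeight Fq (x + α • fun _ => b) ≤ rankWeight Fq x + 1 := by
  have hspan : span Fq (Set.range (x + α • fun _ => b)) ≤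
      span Fq (Set.range x) ⊔ span Fq {b} := by
    rw [span_le]
    rintro _ ⟨i, rfl⟩
    exact add_mem (mem_sup_left (subset_span ⟨i, rfl⟩))
      (mem_sup_right (smul_mem _ _ (mem_span_singleton_self b)))
  have : Module.Finite Fq (span Fq (Set.range x)) :=
    Module.Finite.span_of_finite Fq (Set.finite_range x)
  have hb : finrank Fq (span Fq {b}) ≤ 1 := by
    simpa using finrank_span_le_card (R := Fq) ({b} : Set Fqm)
  exact (Submodule.finrank_mono hspan).trans
    ((Submodule.finrank_add_le_finrank_add_finrank _ _).trans (Nat.add_le_add_left hb _))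

theorem exists_not_le_ker_linearCombination {K : Submodule Fq (Fin n → Fq)} (hK : K ≠ ⊥) :
    ∃ δ : Fin n → Fq, ¬ K ≤ LinearMap.ker (Fintype.linearCombination Fq δ) := by
  classical
  obtain ⟨l, hlK, hl⟩ := (Submodule.ne_bot_iff K).1 hK
  obtain ⟨i, hi⟩ := Function.ne_iff.1 hl
  refine ⟨Pi.single i 1, fun hle => hi ?_⟩
  simpa [Fintype.linearCombination_apply, Pi.single_apply] using hle hlK

variable {φ : Fqm →ₗ[Fq] Fq} {b : Fqm} {x : Fin n → Fqm}

theorem ker_linearCombination_add_smul (hb : φ b = 1) (hx : ∀ i, φ (x i) = 0)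
    (α : Fin n → Fq) :
    LinearMap.ker (Fintype.linearCombination Fq (x + α • fun _ => b)) =
      LinearMap.ker (Fintype.linearCombination Fq x) ⊓
        LinearMap.ker (Fintype.linearCombination Fq α) := by
  ext l
  have hsplit : Fintype.linearCombination Fq (x + α • fun _ => b) l =
      Fintype.linearCombination Fq x l + Fintype.linearCombination Fq α l • b := by
    simp [Fintype.linearCombination_apply, Finset.sum_add_distrib, Finset.sum_smul, smul_smul]
  have hφ : φ (Fintype.linearCombination Fq x l) = 0 := by
    simp [Fintype.linearCombination_apply, hx]
  simp only [LinearMap.mem_ker, mem_inf, hsplit]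
  constructor
  · intro h
    have hα : Fintype.linearCombination Fq α l = 0 := by
      simpa [hφ, hb] using congrArg φ h
    exact ⟨by simpa [hα] using h, hα⟩
  · rintro ⟨h₁, h₂⟩
    simp [h₁, h₂]

theorem rankWeight_le_rankWeight_add_smul (hb : φ b = 1) (hx : ∀ i, φ (x i) = 0)
    (α : Fin n → Fq) : rankWeight Fq x ≤ rankWeight Fq (x + α • fun _ => b) := by
  have h₁ := rankWeight_add_finrank_ker (Fq := Fq) x
  have h₂ := rankWeight_add_finrank_ker (Fq := Fq) (x + α • fun _ => b)
  have hle := Submodule.finrank_mono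
    ((ker_linearCombination_add_smul hb hx α).le.trans inf_le_left)
  omega

theorem rankWeight_add_smul_eq_iff (hb : φ b = 1) (hx : ∀ i, φ (x i) = 0) (α : Fin n → Fq) :
    rankWeight Fq (x + α • fun _ => b) = rankWeight Fq x ↔
      LinearMap.ker (Fintype.linearCombination Fq x) ≤
        LinearMap.ker (Fintype.linearCombination Fq α) := by
  have h₁ := rankWeight_add_finrank_ker (Fq := Fq) x
  have h₂ := rankWeight_add_finrank_ker (Fq := Fq) (x + α • fun _ => b)
  rw [ker_linearCombination_add_smul hb hx] at h₂
  rw [← inf_eq_left]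
  constructor
  · exact fun h => Submodule.eq_of_le_of_finrank_eq inf_le_left (by omega)
  · intro h
    rw [h] at h₂
    omega

theorem rankWeight_add_sub_smul_le (hb : φ b = 1) (hx : ∀ i, φ (x i) = 0) {ρ : ℕ}
    {α β : Fin n → Fq} (hα : rankWeight Fq (x + α • fun _ => b) ≤ ρ)
    (hβ : rankWeight Fq (x + β • fun _ => b) ≤ ρ) :
    rankWeight Fq (x + (α - β) • fun _ => b) ≤ ρ := by
  rcases lt_or_ge (rankWeight Fq x) ρ with hlt | hge
  · exact (rankWeight_add_smul_le x (α - β) b).trans hlt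
  · have hker : ∀ γ, rankWeight Fq (x + γ • fun _ => b) ≤ ρ →
        LinearMap.ker (Fintype.linearCombination Fq x) ≤
          LinearMap.ker (Fintype.linearCombination Fq γ) := fun γ hγ =>
      (rankWeight_add_smul_eq_iff hb hx γ).1
        (le_antisymm (hγ.trans hge) (rankWeight_le_rankWeight_add_smul hb hx γ))
    have hsub : LinearMap.ker (Fintype.linearCombination Fq x) ≤
        LinearMap.ker (Fintype.linearCombination Fq (α - β)) := fun l hl => by
      have hαl := hker α hα hl
      have hβl := hker β hβ hl
      simp only [LinearMap.mem_ker, Fintype.linearCombination_apply] at hαl hβl ⊢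
      simp only [Pi.sub_apply, smul_sub, Finset.sum_sub_distrib, hαl, hβl, sub_zero]
    rw [(rankWeight_add_smul_eq_iff hb hx _).2 hsub]
    exact (rankWeight_le_rankWeight_add_smul hb hx α).trans hα

end RankWeight

def rankBall (Fq : Type*) {Fqm : Type*} [Field Fq] [Field Fqm] [Algebra Fq Fqm] {n : ℕ}
    (c : Fin n → Fqm) (ρ : ℕ) : Set (Fin n → Fqm) :=
  {x | rankWeight Fq (x - c) ≤ ρ}

section Balls

variable {Fq Fqm : Type*} [Field Fq] [Field Fqm] [Algebra Fq Fqm] {n ρ : ℕ}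

theorem image_add_rankBall (c d : Fin n → Fqm) :
    (· + d) '' rankBall Fq c ρ = rankBall Fq (c + d) ρ := by
  ext x
  simp only [Set.image_add_right, Set.mem_preimage, rankBall, Set.mem_ofPred_eq]
  rw [show x + -d - c = x - (c + d) by abel]

theorem ncard_rankBall (c : Fin n → Fqm) :
    (rankBall Fq c ρ).ncard = Nat.card {z : Fin n → Fqm // rankWeight Fq z ≤ ρ} := by
  rw [← zero_add c, ← image_add_rankBall, Set.ncard_image_of_injective _ (add_left_injective c),
    ← Nat.card_coe_set_eq]
  exact Nat.card_congr (Equiv.subtypeEquivRight fun z => by simp [rankBall])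

theorem ncard_rankBall_inter_rankBall (s t : Fin n → Fqm) :
    (rankBall Fq t ρ ∩ rankBall Fq s ρ).ncard =
      (rankBall Fq (t - s) ρ ∩ rankBall Fq 0 ρ).ncard := by
  rw [← Set.ncard_image_of_injective (rankBall Fq (t - s) ρ ∩ rankBall Fq 0 ρ)
    (add_left_injective s),
    Set.image_inter (add_left_injective s), image_add_rankBall, image_add_rankBall,
    sub_add_cancel, zero_add]

end Balls

section Fibres

variable {Fq Fqm : Type*} [Field Fq] [Field Fqm] [Algebra Fq Fqm] {n ρ : ℕ}
  {φ : Fqm →ₗ[Fq] Fq} {b : Fqm}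

theorem add_sub_smul_mem_rankBall_inter (hb : φ b = 1) {c h : Fin n → Fqm}
    (hc : ∀ i, φ (c i) = 0) (hh : ∀ i, φ (h i) = 0) {δ α γ : Fin n → Fq}
    (hα : h + α • (fun _ => b) ∈ rankBall Fq (c + δ • fun _ => b) ρ ∩ rankBall Fq 0 ρ)
    (hγ : h + γ • (fun _ => b) ∈ rankBall Fq (c + δ • fun _ => b) ρ ∩ rankBall Fq 0 ρ) :
    h + (α - γ) • (fun _ => b) ∈ rankBall Fq c ρ ∩ rankBall Fq 0 ρ := by
  have hhc : ∀ i, φ ((h - c) i) = 0 := fun i => by simp [hh, hc]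
  have hshift : ∀ β : Fin n → Fq, h + β • (fun _ => b) - (c + δ • fun _ => b) =
      (h - c) + (β - δ) • fun _ => b := fun β => by module
  simp only [rankBall, Set.mem_inter_iff, Set.mem_ofPred_eq, sub_zero, hshift] at hα hγ ⊢
  constructor
  · rw [show h + (α - γ) • (fun _ => b) - c = (h - c) + ((α - δ) - (γ - δ)) • fun _ => b by
      module]
    exact rankWeight_add_sub_smul_le hb hhc hα.1 hγ.1
  · exact rankWeight_add_sub_smul_le hb hh hα.2 hγ.2

theorem ncard_rankBall_add_smul_inter_le [Finite Fqm] (hb : φ b = 1) {c : Fin n → Fqm}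
    (hc : ∀ i, φ (c i) = 0) (δ : Fin n → Fq) :
    (rankBall Fq (c + δ • fun _ => b) ρ ∩ rankBall Fq 0 ρ).ncard ≤
      (rankBall Fq c ρ ∩ rankBall Fq 0 ρ).ncard := by
  set B : Fin n → Fqm := fun _ => b
  set P := rankBall Fq (c + δ • B) ρ ∩ rankBall Fq 0 ρ
  let π : (Fin n → Fqm) → Fin n → Fqm := fun x => x - (φ ∘ x) • B
  have hπ : ∀ x i, φ (π x i) = 0 := fun x i => by simp [π, B, hb]
  have hdecomp : ∀ x, π x + (φ ∘ x) • B = x := fun x => sub_add_cancel _ _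
  have hπ_add : ∀ x (α : Fin n → Fq), π (x + α • B) = π x := fun x α => by
    ext i
    simp [π, B, hb, add_smul]
  let y : (Fin n → Fqm) → Fin n → Fqm := fun x =>
    Classical.epsilon fun y => y ∈ P ∧ π y = π x
  have hy : ∀ x ∈ P, y x ∈ P ∧ π (y x) = π x := fun x hx =>
    Classical.epsilon_spec (p := fun y => y ∈ P ∧ π y = π x) ⟨x, hx, rfl⟩
  -- On the fibre of `x`, subtracting the `b`-part of the representative `y x` is the
  -- translation `α ↦ α - γ` of the fibre of `P` into that of `rankBall Fq c ρ ∩ rankBall Fq 0 ρ`.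
  refine Set.ncard_le_ncard_of_injOn (fun x => x - (φ ∘ y x) • B) (fun x hx => ?_)
    (fun x _ x' _ hxx' => ?_) (Set.toFinite _)
  · obtain ⟨hyP, hyπ⟩ := hy x hx
    have hxP : π x + (φ ∘ x) • B ∈ P := by rw [hdecomp]; exact hx
    have hyP' : π x + (φ ∘ y x) • B ∈ P := by rw [← hyπ, hdecomp]; exact hyP
    have hmem := add_sub_smul_mem_rankBall_inter hb hc (hπ x) hxP hyP'
    rwa [sub_smul, ← add_sub_assoc, hdecomp] at hmem
  · have hπeq : π x = π x' := by
      simpa only [sub_eq_add_neg, ← neg_smul, hπ_add] using congrArg π hxx'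
    have hyeq : y x = y x' := by simp only [y, hπeq]
    simpa [hyeq] using hxx'

end Fibres

section Monotonicity

variable {Fq Fqm : Type*} [Field Fq] [Field Fqm] [Algebra Fq Fqm] [Finite Fqm] {n ρ : ℕ}

theorem exists_rankWeight_succ_ncard_inter_le {c : Fin n → Fqm} (hcn : rankWeight Fq c < n)
    (hcm : rankWeight Fq c < finrank Fq Fqm) :
    ∃ c' : Fin n → Fqm, rankWeight Fq c' = rankWeight Fq c + 1 ∧
      (rankBall Fq c' ρ ∩ rankBall Fq 0 ρ).ncard ≤
        (rankBall Fq c ρ ∩ rankBall Fq 0 ρ).ncard := by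
  have hC : span Fq (Set.range c) < ⊤ := by
    refine lt_top_iff_ne_top.2 fun h => ?_
    have : rankWeight Fq c = finrank Fq Fqm := by rw [rankWeight, h, finrank_top]
    omega
  obtain ⟨φ, hφ, hCφ⟩ := (span Fq (Set.range c)).exists_le_ker_of_lt_top hC
  obtain ⟨v, hv⟩ : ∃ v, φ v ≠ 0 := by
    by_contra! h
    exact hφ (LinearMap.ext h)
  have hb : φ ((φ v)⁻¹ • v) = 1 := by simp [hv]
  have hc : ∀ i, φ (c i) = 0 := fun i => hCφ (subset_span ⟨i, rfl⟩)
  have hker : LinearMap.ker (Fintype.linearCombination Fq c) ≠ ⊥ := by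
    intro h
    have := rankWeight_add_finrank_ker (Fq := Fq) c
    rw [h, finrank_bot] at this
    omega
  obtain ⟨δ, hδ⟩ := exists_not_le_ker_linearCombination hker
  refine ⟨c + δ • fun _ => (φ v)⁻¹ • v, le_antisymm (rankWeight_add_smul_le c δ _) ?_,
    ncard_rankBall_add_smul_inter_le hb hc δ⟩
  exact lt_of_le_of_ne (rankWeight_le_rankWeight_add_smul hb hc δ)
    fun h => hδ ((rankWeight_add_smul_eq_iff hb hc δ).1 h.symm)

theorem interVol_le_ncard_inter (hnm : n ≤ finrank Fq Fqm) {D : ℕ} (hD : D ≤ n)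
    {c : Fin n → Fqm} (hc : rankWeight Fq c ≤ D) :
    interVol Fq Fqm n ρ D ≤ (rankBall Fq c ρ ∩ rankBall Fq 0 ρ).ncard := by
  obtain ⟨k, hk⟩ := Nat.exists_eq_add_of_le hc
  induction k generalizing c with
  | zero => exact Nat.sInf_le ⟨c, 0, by rw [sub_zero, hk, add_zero], rfl⟩
  | succ k ih =>
    obtain ⟨c', hc', hle⟩ :=
      exists_rankWeight_succ_ncard_inter_le (Fq := Fq) (ρ := ρ) (c := c) (by omega) (by omega)
    exact (ih (c := c') (by omega) (by omega)).trans hle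

end Monotonicity

section Union

variable {Fq Fqm : Type*} [Field Fq] [Field Fqm] [Algebra Fq Fqm] {n ρ : ℕ}

theorem exists_ne_rankWeight_sub_le [Fintype Fqm] (S : Finset (Fin n → Fqm)) {j : ℕ}
    (hj : j ≤ n) (hS : Fintype.card Fqm ^ j < S.card) :
    ∃ s ∈ S, ∃ t ∈ S, s ≠ t ∧ rankWeight Fq (t - s) ≤ n - j := by
  classical
  obtain ⟨A, -, hA⟩ :=
    Finset.exists_subset_card_eq (s := (Finset.univ : Finset (Fin n))) (by simpa using hj)
  obtain ⟨s, hs, t, ht, hst, hrestr⟩ := Finset.exists_ne_map_eq_of_card_lt_of_maps_to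
    (t := (Finset.univ : Finset (A → Fqm))) (f := fun (c : Fin n → Fqm) (i : A) => c i)
    (by simpa [hA] using hS) (fun _ _ => Finset.mem_univ _)
  refine ⟨s, hs, t, ht, hst, ?_⟩
  have hcompl := rankWeight_le_card_of_eq_zero (Fq := Fq) Aᶜ (x := t - s) fun i hi => by
    have := congrFun hrestr ⟨i, by simpa using hi⟩
    simp [this]
  simpa [Finset.card_compl, hA] using hcompl

theorem ncard_iUnion_rankBall_le_erase [Finite Fqm] [DecidableEq (Fin n → Fqm)]
    (S : Finset (Fin n → Fqm)) {s t : Fin n → Fqm} (hs : s ∈ S) (hst : s ≠ t) :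
    (⋃ c ∈ S, rankBall Fq c ρ).ncard ≤ (⋃ c ∈ S.erase t, rankBall Fq c ρ).ncard +
      (Nat.card {z : Fin n → Fqm // rankWeight Fq z ≤ ρ} -
        (rankBall Fq t ρ ∩ rankBall Fq s ρ).ncard) := by
  have hsub : ⋃ c ∈ S, rankBall Fq c ρ ⊆
      (⋃ c ∈ S.erase t, rankBall Fq c ρ) ∪ (rankBall Fq t ρ \ rankBall Fq s ρ) := by
    intro x hx
    obtain ⟨c, hc, hxc⟩ := Set.mem_iUnion₂.1 hx
    by_cases hct : c = t
    · subst hct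
      by_cases hxs : x ∈ rankBall Fq s ρ
      · exact Or.inl (Set.mem_biUnion (Finset.mem_erase.2 ⟨hst, hs⟩) hxs)
      · exact Or.inr ⟨hxc, hxs⟩
    · exact Or.inl (Set.mem_biUnion (Finset.mem_erase.2 ⟨hct, hc⟩) hxc)
  have hdiff := Set.ncard_inter_add_ncard_sdiff_eq_ncard (rankBall Fq t ρ) (rankBall Fq s ρ)
  rw [ncard_rankBall] at hdiff
  calc (⋃ c ∈ S, rankBall Fq c ρ).ncard
      ≤ ((⋃ c ∈ S.erase t, rankBall Fq c ρ) ∪ (rankBall Fq t ρ \ rankBall Fq s ρ)).ncard :=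
        Set.ncard_le_ncard hsub
    _ ≤ (⋃ c ∈ S.erase t, rankBall Fq c ρ).ncard +
        (rankBall Fq t ρ \ rankBall Fq s ρ).ncard := Set.ncard_union_le _ _
    _ = _ := by omega

theorem ncard_iUnion_rankBall_le [Fintype Fqm] (hnm : n ≤ finrank Fq Fqm)
    (S : Finset (Fin n → Fqm)) (hS : S.Nonempty) (hSn : S.card ≤ Fintype.card Fqm ^ n) :
    (⋃ c ∈ S, rankBall Fq c ρ).ncard ≤ Nat.card {z : Fin n → Fqm // rankWeight Fq z ≤ ρ} +
      ∑ k ∈ Finset.Ico 1 S.card, (Nat.card {z : Fin n → Fqm // rankWeight Fq z ≤ ρ} -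
        interVol Fq Fqm n ρ (n - Nat.log (Fintype.card Fqm) k)) := by
  classical
  obtain ⟨K, hK⟩ : ∃ K, S.card = K + 1 := Nat.exists_eq_succ_of_ne_zero hS.card_pos.ne'
  induction K generalizing S with
  | zero =>
    obtain ⟨c, rfl⟩ := Finset.card_eq_one.1 hK
    simp [ncard_rankBall]
  | succ K ih =>
    set j := Nat.log (Fintype.card Fqm) (K + 1)
    have hj : j < n := Nat.log_lt_of_lt_pow (by omega) (by omega)
    obtain ⟨s, hs, t, ht, hst, hts⟩ := exists_ne_rankWeight_sub_le (Fq := Fq) S hj.le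
      ((Nat.pow_log_le_self _ (by omega)).trans_lt (by omega))
    have hI : interVol Fq Fqm n ρ (n - j) ≤ (rankBall Fq t ρ ∩ rankBall Fq s ρ).ncard := by
      rw [ncard_rankBall_inter_rankBall]
      exact interVol_le_ncard_inter hnm (Nat.sub_le n j) hts
    have herase : (S.erase t).card = K + 1 := by rw [Finset.card_erase_of_mem ht, hK]; rfl
    calc (⋃ c ∈ S, rankBall Fq c ρ).ncard
        ≤ _ := ncard_iUnion_rankBall_le_erase S hs hst
      _ ≤ _ := add_le_add (ih (S.erase t) ⟨s, Finset.mem_erase.2 ⟨hst, hs⟩⟩ (by omega) herase)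
          (tsub_le_tsub_left hI _)
      _ = _ := by
        rw [herase, hK, Finset.sum_Ico_succ_top (a := 1) (b := K + 1) (by omega), add_assoc]

end Union

theorem stmt13_general (q m n ρ K l : ℕ) (Fq Fqm : Type*) [Field Fq] [Fintype Fq] [Field Fqm]
    [Fintype Fqm] [Algebra Fq Fqm] (hq : Fintype.card Fq = q)
    (hm : Module.finrank Fq Fqm = m) (hnm : n ≤ m)
    (hK1 : 1 ≤ K) (hK2 : K ≤ q ^ (m * n)) (hl : l = Nat.log (q ^ m) K)
    (S : Finset (Fin n → Fqm)) (hS : S.card = K) :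
    Nat.card {y : Fin n → Fqm | ∃ c ∈ S, rankWeight Fq (y - c) ≤ ρ} ≤
      Nat.card {z : Fin n → Fqm // rankWeight Fq z ≤ ρ} +
      (∑ a ∈ Finset.Icc 1 l, (q ^ (a * m) - q ^ ((a - 1) * m)) *
        (Nat.card {z : Fin n → Fqm // rankWeight Fq z ≤ ρ} -
          interVol Fq Fqm n ρ (n - a + 1))) +
      (K - q ^ (l * m)) *
        (Nat.card {z : Fin n → Fqm // rankWeight Fq z ≤ ρ} -
          interVol Fq Fqm n ρ (n - l)) := by
  have hcard : Fintype.card Fqm = q ^ m := by rw [Module.card_eq_pow_finrank (K := Fq), hq, hm]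
  have hb : 1 < q ^ m := hcard ▸ Fintype.one_lt_card
  have hln : l ≤ n := hl ▸ (Nat.log_mono_right (hK2.trans_eq (pow_mul q m n))).trans_eq
    (Nat.log_pow hb n)
  have hunion : {y : Fin n → Fqm | ∃ c ∈ S, rankWeight Fq (y - c) ≤ ρ} =
      ⋃ c ∈ S, rankBall Fq c ρ := by
    ext
    simp [rankBall]
  have hbound := ncard_iUnion_rankBall_le (ρ := ρ) (hm ▸ hnm) S (Finset.card_pos.1 (by omega))
    (by rwa [hS, hcard, ← pow_mul])
  rw [Nat.card_coe_set_eq, hunion]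
  refine hbound.trans_eq ?_
  rw [hS, hcard, sum_Ico_log_eq hb
    (fun j => Nat.card {z : Fin n → Fqm // rankWeight Fq z ≤ ρ} - interVol Fq Fqm n ρ (n - j))
    (by omega), ← hl, add_assoc]
  simp_rw [pow_mul']
  congr 2
  refine Finset.sum_congr rfl fun a ha => ?_
  rw [Finset.mem_Icc] at ha
  rw [show n - (a - 1) = n - a + 1 by omega]

/-- The volume of the union of any `K` balls of rank radius `ρ` in `GF(q^m)^n` is at most
`v(ρ) + Σ_{a=1}^{l} (q^{am} - q^{(a-1)m})[v(ρ) - I(ρ, n-a+1)] + (K - q^{lm})[v(ρ) - I(ρ, n-l)]`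
with `l = ⌊log_{q^m} K⌋`. -/
theorem stmt13 (q m n ρ K l : ℕ) (Fq Fqm : Type*) [Field Fq] [Fintype Fq] [Field Fqm]
    [Fintype Fqm] [Algebra Fq Fqm] (hq : Fintype.card Fq = q)
    (hm : Module.finrank Fq Fqm = m) (hnm : n ≤ m) (hρ : ρ ≤ n)
    (hK1 : 1 ≤ K) (hK2 : K ≤ q ^ (m * n)) (hl : l = Nat.log (q ^ m) K)
    (S : Finset (Fin n → Fqm)) (hS : S.card = K) :
    Nat.card {y : Fin n → Fqm | ∃ c ∈ S, rankWeight Fq (y - c) ≤ ρ} ≤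
      Nat.card {z : Fin n → Fqm // rankWeight Fq z ≤ ρ} +
      (∑ a ∈ Finset.Icc 1 l, (q ^ (a * m) - q ^ ((a - 1) * m)) *
        (Nat.card {z : Fin n → Fqm // rankWeight Fq z ≤ ρ} -
          interVol Fq Fqm n ρ (n - a + 1))) +
      (K - q ^ (l * m)) *
        (Nat.card {z : Fin n → Fqm // rankWeight Fq z ≤ ρ} -
          interVol Fq Fqm n ρ (n - l)) :=
  stmt13_general q m n ρ K l Fq Fqm hq hm hnm hK1 hK2 hl S hS
end

section
/- Let V be an m × n matrix over GF(q) and let r be the rank of the submatrix formed by its first ρ rows. Then there exist an r-subset I of the first ρ row indices and an r-subset J of column indices such that the r × r submatrix V(I, J) is invertible, and the matrix U defined by keeping the first ρ rows of V and setting row i (for i ≥ ρ) equal to V(i, J)·V(I, J)^{−1}·V(I, ·) satisfies: rank(U) = r, U agrees with V on the first ρ rows, and U agrees with V on all columns indexed by J. -/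
/-!
Pick `I` among the first `ρ` rows so that the rows `V(I, ·)` form a basis of the row space of
those rows, then `J` so that the columns of `V(I, ·)` indexed by `J` form a basis of its column
space; `V(I, J)` is then an `r × r` matrix of rank `r`. Its rows therefore span `K^J`, so each
`V(i, J)` is `c · V(I, J)` for some `c`, and `c · V(I, ·)` is a row in the row space of `V(I, ·)`
agreeing with `V i` on `J`. The rows of `U` span exactly the row space of `V(I, ·)`, of
dimension `r`.
-/

open Matrix Submodule Module

section

variable {K ι : Type*} [Field K]

lemma exists_finset_subset_linearIndepOn_span_eq {M : Type*} [AddCommGroup M] [Module K M]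
    (v : ι → M) (s : Finset ι) :
    ∃ t ⊆ s, LinearIndepOn K v (t : Set ι) ∧ span K (v '' t) = span K (v '' s) := by
  classical
  obtain ⟨b, hbs, -, hspan, hli⟩ :=
    exists_linearIndepOn_extension (linearIndepOn_empty K v) (Set.empty_subset (s : Set ι))
  have hb : b.Finite := s.finite_toSet.subset hbs
  refine ⟨hb.toFinset, by simpa using hbs, by simpa using hli, ?_⟩
  rw [hb.coe_toFinset]
  exact le_antisymm (span_mono (Set.image_mono hbs)) (span_le.2 hspan)

lemma LinearIndepOn.finrank_span_image_finset {M : Type*} [AddCommGroup M] [Module K M]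
    {v : ι → M} {t : Finset ι} (h : LinearIndepOn K v (t : Set ι)) :
    finrank K (span K (v '' t)) = t.card := by
  rw [Set.image_eq_range, finrank_span_eq_card h]
  simp

namespace Matrix

variable {κ : Type*}

lemma exists_finset_card_eq_rank_submatrix_cols [Fintype κ] (A : Matrix ι κ K) :
    ∃ J : Finset κ, J.card = A.rank ∧ (A.submatrix id ((↑) : J → κ)).rank = A.rank := by
  obtain ⟨J, -, hli, hspan⟩ :=
    exists_finset_subset_linearIndepOn_span_eq (K := K) A.col Finset.univ
  have hcols : Set.range (A.submatrix id ((↑) : J → κ)).col = A.col '' J :=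
    (Set.image_eq_range A.col J).symm
  refine ⟨J, ?_, ?_⟩
  · rw [← hli.finrank_span_image_finset, hspan, Finset.coe_univ, Set.image_univ,
      rank_eq_finrank_span_cols]
  · rw [rank_eq_finrank_span_cols, hcols, hspan, Finset.coe_univ, Set.image_univ,
      rank_eq_finrank_span_cols]

lemma exists_mem_span_row_eqOn_of_rank_submatrix_cols [Fintype ι] (R : Matrix ι κ K)
    {J : Finset κ} (hJ : (R.submatrix id ((↑) : J → κ)).rank = J.card) (x : κ → K) :
    ∃ y ∈ span K (Set.range R.row), ∀ j ∈ J, y j = x j := by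
  set A := R.submatrix id ((↑) : J → κ)
  have hA : span K (Set.range A.row) = ⊤ := by
    apply eq_top_of_finrank_eq
    rw [← rank_eq_finrank_span_row, hJ, finrank_fintype_fun_eq_card, Fintype.card_coe]
  obtain ⟨c, hc⟩ : (fun j : J => x j) ∈ LinearMap.range A.vecMulLinear := by
    rw [range_vecMulLinear, hA]; trivial
  refine ⟨c ᵥ* R, by rw [← range_vecMulLinear]; exact ⟨c, rfl⟩, fun j hj => ?_⟩
  exact congrFun hc ⟨j, hj⟩

lemma rank_submatrix_rows_eq_finrank_span_image {ι' : Type*} [Fintype κ] [Finite ι']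
    (V : Matrix ι κ K) (f : ι' → ι) :
    (V.submatrix f id).rank = finrank K (span K (V.row '' Set.range f)) := by
  rw [rank_eq_finrank_span_row, ← Set.range_comp]
  rfl

lemma rank_eq_finrank_span_image_of_forall_row_mem [Fintype κ] [Finite ι] (U : Matrix ι κ K)
    (I : Set ι) (hU : ∀ i, U.row i ∈ span K (U.row '' I)) :
    U.rank = finrank K (span K (U.row '' I)) := by
  rw [rank_eq_finrank_span_row, le_antisymm (span_le.2 (Set.range_subset_iff.2 hU))
    (span_mono (Set.image_subset_range _ _))]

lemma exists_eqOn_rows_cols_row_mem_span (V : Matrix ι κ K) (p : ι → Prop) [DecidablePred p]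
    {I : Finset ι} {J : Finset κ}
    (hIJ : (V.submatrix ((↑) : I → ι) ((↑) : J → κ)).rank = J.card)
    (hp : ∀ i, p i → V.row i ∈ span K (V.row '' I)) :
    ∃ U : Matrix ι κ K, (∀ i, p i → U i = V i) ∧ (∀ i, ∀ j ∈ J, U i j = V i j) ∧
      ∀ i, U.row i ∈ span K (V.row '' I) := by
  have hrows : Set.range (V.submatrix ((↑) : I → ι) id).row = V.row '' I :=
    (Set.image_eq_range V.row I).symm
  choose y hy hyJ using fun i =>
    (V.submatrix ((↑) : I → ι) id).exists_mem_span_row_eqOn_of_rank_submatrix_cols hIJ (V i)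
  refine ⟨of fun i => if p i then V i else y i, fun i hi => if_pos hi, fun i j hj => ?_,
    fun i => ?_⟩
  · by_cases hi : p i
    · simp [hi]
    · simp [hi, hyJ i j hj]
  · by_cases hi : p i
    · change (if p i then V i else y i) ∈ _
      rw [if_pos hi]
      exact hp i hi
    · simpa [hi, hrows] using hy i

end Matrix

end

theorem stmt15_general (m n ρ r : ℕ) (Fq : Type*) [Field Fq] (hρ : ρ ≤ m)
    (V : Matrix (Fin m) (Fin n) Fq)
    (hrank : (Matrix.of fun (i : Fin ρ) (j : Fin n) => V (Fin.castLE hρ i) j).rank = r) :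
    ∃ (I : Finset (Fin m)) (J : Finset (Fin n)), I.card = r ∧ J.card = r ∧
      (∀ i ∈ I, (i : ℕ) < ρ) ∧
      (V.submatrix (fun i : I => (i : Fin m)) (fun j : J => (j : Fin n))).rank = r ∧
      ∃ U : Matrix (Fin m) (Fin n) Fq, U.rank = r ∧
        (∀ (i : Fin m) (j : Fin n), (i : ℕ) < ρ → U i j = V i j) ∧
        (∀ (i : Fin m), ∀ j ∈ J, U i j = V i j) ∧
        (∀ i : Fin m, U i ∈ Submodule.span Fq {w : Fin n → Fq | ∃ k ∈ I, w = V k}) := by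
  classical
  set S := Finset.univ.filter fun i : Fin m => (i : ℕ) < ρ
  have hS : finrank Fq (span Fq (V.row '' S)) = r := by
    rw [← hrank, show (of fun (i : Fin ρ) (j : Fin n) => V (Fin.castLE hρ i) j) =
      V.submatrix (Fin.castLE hρ) id from rfl, rank_submatrix_rows_eq_finrank_span_image,
      Fin.range_castLE, Finset.coe_filter_univ]
  obtain ⟨I, hIS, hIli, hIspan⟩ := exists_finset_subset_linearIndepOn_span_eq (K := Fq) V.row S
  have hI : I.card = r := by rw [← hIli.finrank_span_image_finset, hIspan, hS]
  have hIρ : ∀ i ∈ I, (i : ℕ) < ρ := fun i hi => (Finset.mem_filter.1 (hIS hi)).2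
  obtain ⟨J, hJ, hIJ⟩ :=
    (V.submatrix ((↑) : I → Fin m) id).exists_finset_card_eq_rank_submatrix_cols
  have hR : (V.submatrix ((↑) : I → Fin m) id).rank = r := by
    rw [LinearIndependent.rank_matrix (M := V.submatrix ((↑) : I → Fin m) id) hIli,
      Fintype.card_coe, hI]
  rw [hR] at hJ hIJ
  obtain ⟨U, hUρ, hUJ, hUspan⟩ := V.exists_eqOn_rows_cols_row_mem_span (fun i => (i : ℕ) < ρ)
    (hIJ.trans hJ.symm) fun i hi => hIspan ▸ subset_span ⟨i, by simpa [S], rfl⟩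
  have hUI : U.row '' I = V.row '' I := Set.image_congr fun k hk => hUρ k (hIρ k hk)
  have hspan : {w : Fin n → Fq | ∃ k ∈ I, w = V k} = V.row '' I := by
    ext w
    exact ⟨fun ⟨k, hk, h⟩ => ⟨k, hk, h.symm⟩, fun ⟨k, hk, h⟩ => ⟨k, hk, h.symm⟩⟩
  refine ⟨I, J, hI, hJ, hIρ, hIJ, U, ?_, fun i j hi => congrFun (hUρ i hi) j, hUJ,
    hspan ▸ hUspan⟩
  rw [U.rank_eq_finrank_span_image_of_forall_row_mem I (hUI ▸ hUspan), hUI,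
    hIli.finrank_span_image_finset, hI]

/-- If the first `ρ` rows of `V ∈ GF(q)^{m×n}` form a submatrix of rank `r`, then there are
an `r`-subset `I` of the first `ρ` row indices and an `r`-subset `J` of column indices with
`V(I,J)` invertible (i.e. the `r × r` submatrix has rank `r`), and a matrix `U` of rank `r`
agreeing with `V` on the first `ρ` rows and on all columns in `J`, each of whose rows lies
in the span of the rows of `V` indexed by `I`. -/
theorem stmt15 (q m n ρ r : ℕ) (Fq : Type*) [Field Fq] [Fintype Fq]
    (hq : Fintype.card Fq = q) (hρ : ρ ≤ m) (hr : r ≤ ρ)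
    (V : Matrix (Fin m) (Fin n) Fq)
    (hrank : (Matrix.of fun (i : Fin ρ) (j : Fin n) => V (Fin.castLE hρ i) j).rank = r) :
    ∃ (I : Finset (Fin m)) (J : Finset (Fin n)), I.card = r ∧ J.card = r ∧
      (∀ i ∈ I, (i : ℕ) < ρ) ∧
      (V.submatrix (fun i : I => (i : Fin m)) (fun j : J => (j : Fin n))).rank = r ∧
      ∃ U : Matrix (Fin m) (Fin n) Fq, U.rank = r ∧
        (∀ (i : Fin m) (j : Fin n), (i : ℕ) < ρ → U i j = V i j) ∧
        (∀ (i : Fin m), ∀ j ∈ J, U i j = V i j) ∧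
        (∀ i : Fin m, U i ∈ Submodule.span Fq {w : Fin n → Fq | ∃ k ∈ I, w = V k}) :=
  stmt15_general m n ρ r Fq hρ V hrank
end

section
/- The code C consisting of all m × n matrices over GF(q) whose first ρ rows are zero and which have at most n − ρ nonzero columns has rank covering radius at most ρ: for every V ∈ GF(q)^{m×n} there exists M ∈ C with rank(V − M) ≤ ρ. -/
/-!
The top `ρ` rows of `V` have rank at most `ρ`, so some `ρ` columns `J` of `V` have top parts
spanning the top parts of all columns. Let `U = V_J * C`, where column `j` of `C` is the unit
vector `e_j` for `j ∈ J` and otherwise expresses the top part of column `j` in terms of the top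
parts of the columns in `J`. Then `rank U ≤ ρ`, and `U` agrees with `V` on `J` and on the top
`ρ` rows, so `M = V - U` has zero top rows and at most `n - ρ` nonzero columns.
-/

namespace Matrix

variable {K ι ι' κ : Type*}

theorem exists_finset_card_eq_range_col_subset_span [Field K] [Fintype κ] (A : Matrix ι κ K)
    {r : ℕ} (hr : A.rank ≤ r) (hκ : r ≤ Fintype.card κ) :
    ∃ J : Finset κ, J.card = r ∧ Set.range A.col ⊆ Submodule.span K (A.col '' J) := by
  classical
  obtain ⟨b, -, -, hspan, hli⟩ := exists_linearIndepOn_extension (linearIndepOn_empty K A.col)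
    (Set.empty_subset Set.univ)
  have : Module.Finite K (Submodule.span K (Set.range A.col)) :=
    Module.Finite.span_of_finite K (Set.finite_range _)
  have hcard : b.toFinset.card ≤ r := calc
    b.toFinset.card = Module.finrank K (Submodule.span K (A.col '' b)) := by
      rw [Set.image_eq_range, finrank_span_eq_card hli, Set.toFinset_card]
    _ ≤ A.rank := by
      rw [rank_eq_finrank_span_cols]
      exact Submodule.finrank_mono (Submodule.span_mono (Set.image_subset_range _ _))
    _ ≤ r := hr
  obtain ⟨J, hbJ, hJ⟩ := Finset.exists_superset_card_eq hcard hκ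
  refine ⟨J, hJ, ?_⟩
  rw [← Set.image_univ]
  refine hspan.trans (Submodule.span_mono (Set.image_mono ?_))
  simpa using hbJ

theorem exists_submatrix_mul_eq_self [CommSemiring K] [Fintype κ] [DecidableEq κ]
    (A : Matrix ι κ K) (J : Finset κ) (hJ : Set.range A.col ⊆ Submodule.span K (A.col '' J)) :
    ∃ C : Matrix J κ K, C.submatrix id (Subtype.val : J → κ) = 1 ∧
      A.submatrix id (Subtype.val : J → κ) * C = A := by
  rw [Set.image_eq_range] at hJ
  have hcoef (j : κ) : ∃ c : J → K, ∑ k, c k • A.col k = A.col j :=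
    (Submodule.mem_span_range_iff_exists_fun K).mp (hJ (Set.mem_range_self j))
  choose c hc using hcoef
  refine ⟨of fun k j => if hj : j ∈ J then (1 : Matrix J J K) k ⟨j, hj⟩ else c j k,
    ?_, ?_⟩
  · ext k k'
    simp
  ext i j
  by_cases hj : j ∈ J
  · simp [mul_apply, hj, one_apply]
  · simpa [mul_apply, hj, mul_comm] using congrFun (hc j) i

theorem exists_rank_le_eq_on_rows_and_cols [Field K] [Fintype κ] [DecidableEq κ]
    (V : Matrix ι κ K) (rows : ι' → ι) {r : ℕ} (hr : (V.submatrix rows id).rank ≤ r)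
    (hκ : r ≤ Fintype.card κ) :
    ∃ (U : Matrix ι κ K) (J : Finset κ), J.card = r ∧ U.rank ≤ r ∧
      U.submatrix rows id = V.submatrix rows id ∧ ∀ i, ∀ j ∈ J, U i j = V i j := by
  obtain ⟨J, hJ, hspan⟩ :=
    (V.submatrix rows id).exists_finset_card_eq_range_col_subset_span hr hκ
  obtain ⟨C, hCJ, hC⟩ := (V.submatrix rows id).exists_submatrix_mul_eq_self J hspan
  set B : Matrix ι J K := V.submatrix id Subtype.val
  have hcols : (B * C).submatrix id Subtype.val = B := by
    rw [submatrix_mul _ _ _ id _ Function.bijective_id, hCJ, submatrix_id_id, Matrix.mul_one]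
  refine ⟨B * C, J, hJ, ?_, ?_, fun i j hj => congrFun (congrFun hcols i) ⟨j, hj⟩⟩
  · calc (B * C).rank ≤ C.rank := rank_mul_le_right _ _
      _ ≤ Fintype.card J := rank_le_card_height C
      _ = r := by rw [Fintype.card_coe, hJ]
  · rwa [submatrix_mul _ _ _ id _ Function.bijective_id, submatrix_submatrix, submatrix_id_id]

theorem natCard_nonzero_cols_le [Zero K] [Fintype κ] (M : Matrix ι κ K) (J : Finset κ)
    (hJ : ∀ i, ∀ j ∈ J, M i j = 0) :
    Nat.card {j : κ // ∃ i, M i j ≠ 0} ≤ Fintype.card κ - J.card := by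
  classical
  rw [← Finset.card_compl, ← Fintype.card_coe, ← Nat.card_eq_fintype_card]
  refine Nat.card_le_card_of_injective (fun j => ⟨j, Finset.mem_compl.2 fun hj => ?_⟩)
    fun j j' h => by simpa [Subtype.ext_iff] using h
  obtain ⟨i, hi⟩ := j.2
  exact hi (hJ i j hj)

end Matrix

theorem stmt16_general (m n ρ : ℕ) (Fq : Type*) [Field Fq] (hρn : ρ ≤ n)
    (V : Matrix (Fin m) (Fin n) Fq) :
    ∃ M : Matrix (Fin m) (Fin n) Fq,
      (∀ (i : Fin m) (j : Fin n), (i : ℕ) < ρ → M i j = 0) ∧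
      Nat.card {j : Fin n // ∃ i : Fin m, M i j ≠ 0} ≤ n - ρ ∧
      (V - M).rank ≤ ρ := by
  set top : {i : Fin m // (i : ℕ) < ρ} → Fin m := Subtype.val
  have htop : (V.submatrix top id).rank ≤ ρ := by
    refine (Matrix.rank_le_card_height _).trans ?_
    simpa using Fintype.card_le_of_injective
      (fun i : {i : Fin m // (i : ℕ) < ρ} => (⟨i.1, i.2⟩ : Fin ρ))
      fun i i' h => by simpa [Subtype.ext_iff, Fin.ext_iff] using h
  obtain ⟨U, J, hJ, hU, hrows, hcols⟩ :=
    V.exists_rank_le_eq_on_rows_and_cols top htop (by simpa using hρn)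
  refine ⟨V - U, fun i j hi => ?_, ?_, by simpa using hU⟩
  · simpa [sub_eq_zero] using (congrFun (congrFun hrows ⟨i, hi⟩) j).symm
  · simpa [hJ] using (V - U).natCard_nonzero_cols_le J fun i j hj => by simp [hcols i j hj]

/-- The code of `m × n` matrices over `GF(q)` with zero first `ρ` rows and at most `n - ρ`
nonzero columns has rank covering radius at most `ρ`: every `V` is within rank distance `ρ`
of such a matrix. -/
theorem stmt16 (q m n ρ : ℕ) (Fq : Type*) [Field Fq] [Fintype Fq]
    (hq : Fintype.card Fq = q) (hρn : ρ ≤ n) (hnm : n ≤ m)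
    (V : Matrix (Fin m) (Fin n) Fq) :
    ∃ M : Matrix (Fin m) (Fin n) Fq,
      (∀ (i : Fin m) (j : Fin n), (i : ℕ) < ρ → M i j = 0) ∧
      Nat.card {j : Fin n // ∃ i : Fin m, M i j ≠ 0} ≤ n - ρ ∧
      (V - M).rank ≤ ρ :=
  stmt16_general m n ρ Fq hρn V
end

section
/- Upper bound on the minimal size of a rank-covering code: K_R(q^m, n, ρ) ≤ Σ_{i=0}^{n−ρ} (n choose i)·(q^{m−ρ} − 1)^i, where K_R(q^m, n, ρ) is the minimum cardinality of a subset of GF(q^m)^n with rank covering radius at most ρ. -/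
open Module Submodule Finset

section Counting

variable {ι β : Type*} [Fintype ι] [DecidableEq ι] [DecidableEq β] [Zero β]

theorem card_filter_support_eq_le (A : Finset β) (s : Finset ι) :
    #{f ∈ Fintype.piFinset (fun _ : ι => A) | ({j | f j ≠ 0} : Finset ι) = s} ≤
      #(A.erase 0) ^ #s := by
  calc _ ≤ #(Fintype.piFinset fun _ : s => A.erase 0) := by
        refine card_le_card_of_injOn (fun f j => f j) (fun f hf => ?_) (fun f hf g hg hfg => ?_)
        · obtain ⟨hfA, rfl⟩ := mem_filter.1 hf
          simp only [mem_coe, Fintype.mem_piFinset, mem_erase]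
          exact fun j => ⟨(mem_filter.1 j.2).2, Fintype.mem_piFinset.1 hfA j⟩
        · obtain ⟨-, hfs⟩ := mem_filter.1 hf
          obtain ⟨-, hgs⟩ := mem_filter.1 hg
          funext j
          by_cases hj : j ∈ s
          · exact congrFun hfg ⟨j, hj⟩
          · have hfj : f j = 0 := by simpa [← hfs] using hj
            have hgj : g j = 0 := by simpa [← hgs] using hj
            rw [hfj, hgj]
    _ = #(A.erase 0) ^ #s := by simp

theorem card_filter_hammingNorm_eq_le (A : Finset β) (i : ℕ) :
    #{f ∈ Fintype.piFinset (fun _ : ι => A) | hammingNorm f = i} ≤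
      (Fintype.card ι).choose i * #(A.erase 0) ^ i := by
  rw [card_eq_sum_card_fiberwise (f := fun f => ({j | f j ≠ 0} : Finset ι))
    (t := powersetCard i univ) (fun f hf => by simpa [hammingNorm] using (mem_filter.1 hf).2)]
  calc _ ≤ ∑ s ∈ powersetCard i (univ : Finset ι), #(A.erase 0) ^ i := by
        refine sum_le_sum fun s hs => ?_
        rw [filter_filter, (mem_powersetCard.1 hs).2.symm]
        refine le_trans (card_le_card fun f hf => ?_) (card_filter_support_eq_le A s)
        simp only [mem_filter] at hf ⊢
        exact ⟨hf.1, hf.2.2⟩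
    _ = _ := by simp

theorem card_filter_hammingNorm_le_le (A : Finset β) (r : ℕ) :
    #{f ∈ Fintype.piFinset (fun _ : ι => A) | hammingNorm f ≤ r} ≤
      ∑ i ∈ range (r + 1), (Fintype.card ι).choose i * #(A.erase 0) ^ i := by
  rw [card_eq_sum_card_fiberwise (f := hammingNorm) (t := range (r + 1))
    (fun f hf => by simpa [Nat.lt_succ_iff] using (mem_filter.1 hf).2)]
  refine sum_le_sum fun i _ => le_trans (card_le_card fun f hf => ?_)
    (card_filter_hammingNorm_eq_le A i)
  simp only [mem_filter] at hf ⊢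
  exact ⟨hf.1.1, hf.2⟩

end Counting

section Covering

variable {K E M ι : Type*} [Field K] [AddCommGroup E] [Module K E] [AddCommGroup M] [Module K M]

theorem Submodule.exists_finrank_eq {k : ℕ} (hk : k ≤ finrank K E) :
    ∃ V : Submodule K E, finrank K V = k := by
  obtain ⟨v, hv⟩ := exists_linearIndependent_of_le_finrank hk
  exact ⟨span K (Set.range v), by rw [finrank_span_eq_card hv, Fintype.card_fin]⟩

theorem exists_finset_card_eq_min_forall_mem_span [Module.Finite K M] [Fintype ι] {ρ : ℕ}
    (hM : finrank K M ≤ ρ) (y : ι → M) :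
    ∃ T : Finset ι, #T = min ρ (Fintype.card ι) ∧ ∀ j, y j ∈ span K (y '' T) := by
  classical
  obtain ⟨b, -, -, hspan, hli⟩ :=
    exists_linearIndepOn_extension (linearIndepOn_empty K y) (Set.empty_subset Set.univ)
  have hb : #b.toFinset ≤ min ρ (Fintype.card ι) := by
    refine le_min ?_ (card_le_univ _)
    rw [Set.toFinset_card]
    exact hli.fintype_card_le_finrank.trans hM
  obtain ⟨T, hbT, -, hT⟩ := exists_subsuperset_card_eq (subset_univ _) hb (by simp)
  refine ⟨T, hT, fun j => span_mono (Set.image_mono ?_) (hspan ⟨j, trivial, rfl⟩)⟩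
  simpa using hbT

theorem exists_mem_ker_forall_sub_mem_span (f : E →ₗ[K] M) (x : ι → E) (T : Set ι)
    (hT : ∀ j, f (x j) ∈ span K (f ∘ x '' T)) :
    ∃ c : ι → E, (∀ j, c j ∈ LinearMap.ker f) ∧ (∀ j ∈ T, c j = 0) ∧
      ∀ j, x j - c j ∈ span K (x '' T) := by
  classical
  have hw : ∀ j, ∃ w ∈ span K (x '' T), f w = f (x j) ∧ (j ∈ T → w = x j) := by
    intro j
    by_cases hj : j ∈ T
    · exact ⟨x j, subset_span ⟨j, hj, rfl⟩, rfl, fun _ => rfl⟩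
    · rw [Set.image_comp, ← map_span] at hT
      obtain ⟨w, hwW, hwx⟩ := hT j
      exact ⟨w, hwW, hwx, fun h => absurd h hj⟩
  choose w hwW hwx hwT using hw
  refine ⟨fun j => x j - w j, fun j => ?_, fun j hj => ?_, fun j => ?_⟩
  · simp [hwx]
  · simp [hwT j hj]
  · simpa using hwW j

theorem exists_forall_mem_hammingNorm_le_finrank_span_le [Fintype ι] [DecidableEq E]
    (V : Submodule K E) [Module.Finite K (E ⧸ V)] {ρ : ℕ} (hV : finrank K (E ⧸ V) ≤ ρ)
    (x : ι → E) :
    ∃ c : ι → E, (∀ j, c j ∈ V) ∧ hammingNorm c ≤ Fintype.card ι - ρ ∧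
      finrank K (span K (Set.range (x - c))) ≤ ρ := by
  classical
  obtain ⟨T, hT, hspan⟩ := exists_finset_card_eq_min_forall_mem_span hV (V.mkQ ∘ x)
  obtain ⟨c, hcV, hcT, hxc⟩ := exists_mem_ker_forall_sub_mem_span V.mkQ x T hspan
  refine ⟨c, by simpa using hcV, ?_, ?_⟩
  · calc hammingNorm c ≤ #Tᶜ :=
          card_le_card fun j hj => mem_compl.2 fun hjT => (mem_filter.1 hj).2 (hcT j hjT)
      _ = Fintype.card ι - ρ := by rw [card_compl, hT]; omega
  · rw [← coe_image] at hxc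
    calc finrank K (span K (Set.range (x - c))) ≤ finrank K (span K (T.image x : Set E)) :=
          Submodule.finrank_mono (span_le.2 (Set.range_subset_iff.2 hxc))
      _ ≤ #T := (finrank_span_finset_le_card _).trans card_image_le
      _ ≤ ρ := hT ▸ min_le_left _ _

end Covering

theorem stmt17_general (q m n ρ : ℕ) (Fq Fqm : Type*) [Field Fq] [Fintype Fq] [Field Fqm]
    [Fintype Fqm] [Algebra Fq Fqm] (hq : Fintype.card Fq = q)
    (hm : Module.finrank Fq Fqm = m) :
    sInf {k | ∃ C : Finset (Fin n → Fqm), C.card = k ∧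
        ∀ x : Fin n → Fqm, ∃ c ∈ C, rankWeight Fq (x - c) ≤ ρ} ≤
      ∑ i ∈ Finset.range (n - ρ + 1), n.choose i * (q ^ (m - ρ) - 1) ^ i := by
  classical
  obtain ⟨V, hV⟩ := Submodule.exists_finrank_eq (K := Fq) (E := Fqm) (k := m - ρ) (by omega)
  have hquot : finrank Fq (Fqm ⧸ V) ≤ ρ := by
    have := V.finrank_quotient_add_finrank
    omega
  let A : Finset Fqm := univ.filter (· ∈ V)
  have hVcard : #(A.erase 0) = q ^ (m - ρ) - 1 := by
    rw [card_erase_of_mem (by simp [A]), ← Fintype.card_subtype, ← hq, ← hV]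
    exact congrArg (· - 1) (card_eq_pow_finrank (K := Fq) (V := V))
  let C := {c ∈ Fintype.piFinset fun _ : Fin n => A | hammingNorm c ≤ n - ρ}
  have hcover : ∀ x, ∃ c ∈ C, rankWeight Fq (x - c) ≤ ρ := fun x => by
    obtain ⟨c, hcV, hc, hxc⟩ := exists_forall_mem_hammingNorm_le_finrank_span_le V hquot x
    exact ⟨c, by simpa [C, A, hcV] using hc, hxc⟩
  calc sInf _ ≤ #C := Nat.sInf_le (Set.mem_ofPred.2 ⟨C, rfl, hcover⟩)
    _ ≤ _ := by
      simpa [hVcard] using card_filter_hammingNorm_le_le (ι := Fin n) A (n - ρ)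

/-- Upper bound on the minimal size of a rank-covering code:
`K_R(q^m, n, ρ) ≤ Σ_{i=0}^{n-ρ} (n choose i)(q^{m-ρ} - 1)^i`. -/
theorem stmt17 (q m n ρ : ℕ) (Fq Fqm : Type*) [Field Fq] [Fintype Fq] [Field Fqm]
    [Fintype Fqm] [Algebra Fq Fqm] (hq : Fintype.card Fq = q)
    (hm : Module.finrank Fq Fqm = m) (hρn : ρ ≤ n) (hnm : n ≤ m) :
    sInf {k | ∃ C : Finset (Fin n → Fqm), C.card = k ∧
        ∀ x : Fin n → Fqm, ∃ c ∈ C, rankWeight Fq (x - c) ≤ ρ} ≤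
      ∑ i ∈ Finset.range (n - ρ + 1), n.choose i * (q ^ (m - ρ) - 1) ^ i :=
  stmt17_general q m n ρ Fq Fqm hq hm
end
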